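/- A mixed strategy ρ is a best response (i.e., supported on maximizers of u) if and only if there exists a support-indicator vector s : A → {0,1} and regrets r_j = v − u_j such that for all j: ρ_j ≤ 1 − s_j and r_j ≤ M·s_j, where M ≥ max_j u_j − min_j u_j and v = max_j u_j. -/
import Mathlib


/-- Support/regret (big-M) characterization of best responses: with
`v = max_j u_j` and `M ≥ max_j u_j − min_j u_j`, a probability distribution `ρ`
is supported on maximizers of `u` iff there is a binary vector `s` with
`ρ_j ≤ 1 − s_j` and `v − u_j ≤ M s_j` for all `j`. -/
theorem support_bigM_iff_best_response (n : ℕ) (u : Fin (n+1) → ℝ) (M : ℝ)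
    (hM : Finset.univ.sup' Finset.univ_nonempty u
            - Finset.univ.inf' Finset.univ_nonempty u ≤ M)
    (ρ : Fin (n+1) → ℝ) (hρ0 : ∀ j, 0 ≤ ρ j) (hρ1 : ∀ j, ρ j ≤ 1)
    (hsum : ∑ j, ρ j = 1) :
    (∀ j, 0 < ρ j → u j = Finset.univ.sup' Finset.univ_nonempty u) ↔
      (∃ s : Fin (n+1) → ℝ, (∀ j, s j = 0 ∨ s j = 1) ∧
        ∀ j, ρ j ≤ 1 - s j ∧
          Finset.univ.sup' Finset.univ_nonempty u - u j ≤ M * s j) := by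
  set v := Finset.univ.sup' Finset.univ_nonempty u with hv
  constructor
  · intro h
    refine ⟨fun j => if u j = v then 0 else 1, fun j => by dsimp; split <;> simp, fun j => ?_⟩
    constructor
    · by_cases hj : u j = v
      · simp [hj, hρ1 j]
      · simp only [hj, if_neg, if_false]
        have : ¬ 0 < ρ j := fun hc => hj (h j hc)
        linarith [hρ0 j, not_lt.mp this]
    · by_cases hj : u j = v
      · simp [hj]
      · simp only [hj, if_false, mul_one]
        have h1 : Finset.univ.inf' Finset.univ_nonempty u ≤ u j :=
          Finset.inf'_le _ (Finset.mem_univ j)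
        linarith
  · rintro ⟨s, hs01, hs⟩ j hj
    have h1 := (hs j).1
    have h2 := (hs j).2
    have hs0 : s j = 0 := by
      rcases hs01 j with h | h
      · exact h
      · rw [h] at h1; linarith
    rw [hs0, mul_zero] at h2
    have : u j ≤ v := Finset.le_sup' u (Finset.mem_univ j)
    linarith
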